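/- Let Δ₁, Δ₂ be real numbers (or integers) with Δ₂ ≥ 2 and Δ₁ ≥ 2Δ₂ + 3, and let L₈ be the symmetric 4×4 matrix with rows (Δ₁, -1, 0, 0), (-1, Δ₂, -1, -1), (0, -1, Δ₂-1, -1), (0, -1, -1, Δ₂-1), and let L₉ be the symmetric 4×4 matrix with rows (Δ₁, -1, 0, 0), (-1, Δ₂, -1, -1), (0, -1, Δ₂-1, 0), (0, -1, 0, Δ₂-1). Then the second largest eigenvalues of L₈ and of L₉ are each strictly greater than Δ₂ + 1/2. -/

import Mathlib

open Finset

/-- The `k`-th largest element (1-indexed) of a multiset of reals, with default `0`. -/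
noncomputable def kthLargestR (s : Multiset ℝ) (k : ℕ) : ℝ :=
  (s.sort (· ≤ ·)).reverse.getD (k - 1) 0

/-- The second largest eigenvalue (i.e. second largest root, with multiplicity, of the
characteristic polynomial) of a square real matrix. -/
noncomputable def secondLargestEig {k : ℕ} (M : Matrix (Fin k) (Fin k) ℝ) : ℝ :=
  kthLargestR M.charpoly.roots 2

/-! The vector `e₃ - e₄` is an eigenvector of `L₈` and of `L₉` (for `Δ₂`, resp. `Δ₂ - 1`), so in
the variable `y = x - Δ₂` each characteristic polynomial is a factor positive for `y > -1` times
a monic cubic. When `Δ₁ - Δ₂` exceeds `23/6` (resp. `17/10`) the cubic is positive at `y = 1/2`,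
negative at `y = 2` and positive at `y = Δ₁ - Δ₂ + 1`, so by the intermediate value theorem the
characteristic polynomial has two roots larger than `Δ₂ + 1/2`. -/

open Polynomial Matrix

theorem lt_kthLargestR_succ {s : Multiset ℝ} {c : ℝ} {k : ℕ}
    (h : k < Multiset.card (s.filter (c < ·))) : c < kthLargestR s (k + 1) := by
  set l := (s.sort (· ≤ ·)).reverse
  have hl : l.Pairwise (· ≥ ·) := List.pairwise_reverse.2 (s.pairwise_sort _)
  have hcount : k < l.countP (c < ·) := by
    rwa [List.countP_reverse, ← Multiset.coe_countP, Multiset.sort_eq,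
      Multiset.countP_eq_card_filter]
  have hk : k < l.length := hcount.trans_le List.countP_le_length
  rw [kthLargestR, Nat.add_sub_cancel, List.getD_eq_getElem _ _ hk]
  by_contra! hle
  have hdrop : (l.drop k).countP (c < ·) = 0 := by
    have htail := hl.drop (i := k)
    rw [List.drop_eq_getElem_cons hk, List.pairwise_cons] at htail
    rw [List.drop_eq_getElem_cons hk, List.countP_eq_zero]
    intro x hx
    rcases List.mem_cons.1 hx with rfl | hx
    · simpa using hle
    · simpa using (htail.1 x hx).trans hle
  have htake := (List.take k l).countP_le_length (p := (c < ·))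
  rw [← List.take_append_drop k l, List.countP_append, hdrop] at hcount
  simp only [List.length_take] at htake
  omega

theorem two_le_card_roots_filter_lt {p : ℝ[X]} (hp : p ≠ 0) {c t u : ℝ} (hct : c < t)
    (htu : t < u) (hc : 0 < p.eval c) (ht : p.eval t < 0) (hu : 0 < p.eval u) :
    2 ≤ Multiset.card (p.roots.filter (c < ·)) := by
  obtain ⟨r₁, hr₁, hr₁p⟩ :=
    intermediate_value_Ioo' hct.le p.continuous.continuousOn ⟨ht, hc⟩
  obtain ⟨r₂, hr₂, hr₂p⟩ :=
    intermediate_value_Ioo htu.le p.continuous.continuousOn ⟨ht, hu⟩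
  have hne : r₁ ≠ r₂ := (hr₁.2.trans hr₂.1).ne
  have hsub : ({r₁, r₂} : Multiset ℝ) ≤ p.roots.filter (c < ·) := by
    rw [Multiset.le_iff_subset (by simp [hne])]
    simp [Multiset.mem_filter, mem_roots hp, hr₁p, hr₂p, hr₁.1, hct.trans hr₂.1]
  simpa [hne] using Multiset.card_le_card hsub

theorem lt_secondLargestEig_of_sign_changes {k : ℕ} (M : Matrix (Fin k) (Fin k) ℝ)
    {c t u : ℝ} (hct : c < t) (htu : t < u) (hc : 0 < M.charpoly.eval c)
    (ht : M.charpoly.eval t < 0) (hu : 0 < M.charpoly.eval u) : c < secondLargestEig M :=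
  lt_kthLargestR_succ (two_le_card_roots_filter_lt M.charpoly_monic.ne_zero hct htu hc ht hu)

def L₈ (Δ₁ Δ₂ : ℝ) : Matrix (Fin 4) (Fin 4) ℝ :=
  !![Δ₁, -1, 0, 0; -1, Δ₂, -1, -1; 0, -1, Δ₂ - 1, -1; 0, -1, -1, Δ₂ - 1]

def L₉ (Δ₁ Δ₂ : ℝ) : Matrix (Fin 4) (Fin 4) ℝ :=
  !![Δ₁, -1, 0, 0; -1, Δ₂, -1, -1; 0, -1, Δ₂ - 1, 0; 0, -1, 0, Δ₂ - 1]

theorem eval_charpoly_L₈ (Δ₁ Δ₂ y : ℝ) : (L₈ Δ₁ Δ₂).charpoly.eval (Δ₂ + y) =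
    y * ((y - (Δ₁ - Δ₂)) * (y ^ 2 + 2 * y - 2) - (y + 2)) := by
  rw [eval_charpoly, det_succ_row_zero]
  simp [L₈, Fin.sum_univ_succ, det_fin_three, Fin.succAbove]
  ring

theorem eval_charpoly_L₉ (Δ₁ Δ₂ y : ℝ) : (L₉ Δ₁ Δ₂).charpoly.eval (Δ₂ + y) =
    (y + 1) * ((y - (Δ₁ - Δ₂)) * (y ^ 2 + y - 2) - (y + 1)) := by
  rw [eval_charpoly, det_succ_row_zero]
  simp [L₉, Fin.sum_univ_succ, det_fin_three, Fin.succAbove]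
  ring

theorem lt_secondLargestEig_L₈ {Δ₁ Δ₂ : ℝ} (h : 23 / 6 < Δ₁ - Δ₂) :
    Δ₂ + 1 / 2 < secondLargestEig (L₈ Δ₁ Δ₂) := by
  refine lt_secondLargestEig_of_sign_changes _ (t := Δ₂ + 2) (u := Δ₂ + (Δ₁ - Δ₂ + 1))
    (by linarith) (by linarith) ?_ ?_ ?_ <;> rw [eval_charpoly_L₈] <;> nlinarith

theorem lt_secondLargestEig_L₉ {Δ₁ Δ₂ : ℝ} (h : 17 / 10 < Δ₁ - Δ₂) :
    Δ₂ + 1 / 2 < secondLargestEig (L₉ Δ₁ Δ₂) := by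
  refine lt_secondLargestEig_of_sign_changes _ (t := Δ₂ + 2) (u := Δ₂ + (Δ₁ - Δ₂ + 1))
    (by linarith) (by linarith) ?_ ?_ ?_ <;> rw [eval_charpoly_L₉] <;> nlinarith

/-- For reals `Δ₂ ≥ 2` and `Δ₁ ≥ 2Δ₂ + 3`, the second largest eigenvalues
of the matrices `L₈` and `L₉` are each strictly greater than `Δ₂ + 1/2`. -/
theorem stmt18 (Δ₁ Δ₂ : ℝ) (h₂ : 2 ≤ Δ₂) (h₁ : 2 * Δ₂ + 3 ≤ Δ₁) :
    secondLargestEig !![Δ₁, -1, 0, 0;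
                        -1, Δ₂, -1, -1;
                        0, -1, Δ₂ - 1, -1;
                        0, -1, -1, Δ₂ - 1] > Δ₂ + 1 / 2 ∧
      secondLargestEig !![Δ₁, -1, 0, 0;
                          -1, Δ₂, -1, -1;
                          0, -1, Δ₂ - 1, 0;
                          0, -1, 0, Δ₂ - 1] > Δ₂ + 1 / 2 :=
  ⟨lt_secondLargestEig_L₈ (by linarith), lt_secondLargestEig_L₉ (by linarith)⟩
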